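/- Let c² > 2 and let A be the n×n matrix with a_{i,j} = c^{−|i−j|}. Then per(A) ≤ (1 + 1/(c²−2))ⁿ. In particular, if c = c_n = Ω(√n), then per(A_n) stays bounded (≤ e) as n → ∞. -/

import Mathlib

/-!
Pivot on the entry `(0,0)` of a nonnegative matrix `A`: expanding `per A` along the first row and
column, the permutations fixing `0` contribute `A₀₀ ∏ Bᵢσᵢ` and those through a transposition
`0 ↔ i₀` contribute `A₀σᵢ₀ Aᵢ₀₀ ∏_{i ≠ i₀} Bᵢσᵢ`, where `B` is the lower-right block. These are
exactly the terms of degree at most one in the rank-one part of `A₀₀ ∏ (Bᵢσᵢ + Aᵢ₀ A₀σᵢ / A₀₀)`,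
so `per A ≤ A₀₀ · per A'` for the pivoted matrix `A'`.

For `A = kms x b` with entries `x^|i-j| + b x^(i+j)` the pivot is again of this form, with diagonal
`1 + b` and new parameter `(1 + 2b) x²`. Starting from `b = 0`, `x = 1/c` and
`β = 1/(c² - 2)`, the fixed point of `b ↦ (1 + 2b)/c²`, every parameter stays in `[0, β]`,
so each of the `n` pivots contributes a factor at most `1 + β`.
-/

open Matrix BigOperators

/-- The permanent of a square matrix. -/
noncomputable def per {α : Type*} [DecidableEq α] [Fintype α] (A : Matrix α α ℝ) : ℝ :=
  ∑ σ : Equiv.Perm α, ∏ i, A i (σ i)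

open Finset

theorem Finset.prod_add_sum_mul_prod_erase_le_prod_add {ι R : Type*} [DecidableEq ι]
    [CommSemiring R] [PartialOrder R] [IsOrderedRing R] (s : Finset ι) {f g : ι → R}
    (hf : ∀ i ∈ s, 0 ≤ f i) (hg : ∀ i ∈ s, 0 ≤ g i) :
    ∏ i ∈ s, f i + ∑ i ∈ s, g i * ∏ j ∈ s.erase i, f j ≤ ∏ i ∈ s, (f i + g i) := by
  rw [← prod_congr rfl fun i _ ↦ add_comm (g i) (f i), prod_add]
  have hsub : insert ∅ (s.image singleton) ⊆ s.powerset := by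
    simp only [insert_subset_iff, empty_mem_powerset, true_and]
    intro t ht
    obtain ⟨i, hi, rfl⟩ := mem_image.mp ht
    simpa using hi
  calc ∏ i ∈ s, f i + ∑ i ∈ s, g i * ∏ j ∈ s.erase i, f j
      = ∑ t ∈ insert ∅ (s.image singleton), (∏ i ∈ t, g i) * ∏ i ∈ s \ t, f i := by
        rw [sum_insert (by simp), sum_image fun _ _ _ _ ↦ singleton_inj.mp]
        simp [sdiff_singleton_eq_erase]
    _ ≤ ∑ t ∈ s.powerset, (∏ i ∈ t, g i) * ∏ i ∈ s \ t, f i := by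
        refine sum_le_sum_of_subset_of_nonneg hsub fun t ht _ ↦ ?_
        have hts := mem_powerset.mp ht
        exact mul_nonneg (prod_nonneg fun i hi ↦ hg i (hts hi))
          (prod_nonneg fun i hi ↦ hf i (mem_sdiff.mp hi).1)

section Permanent

variable {m : ℕ}

lemma per_nonneg {α : Type*} [DecidableEq α] [Fintype α] {A : Matrix α α ℝ}
    (hA : ∀ i j, 0 ≤ A i j) : 0 ≤ per A :=
  sum_nonneg fun _ _ ↦ prod_nonneg fun _ _ ↦ hA _ _

lemma per_fin_zero (A : Matrix (Fin 0) (Fin 0) ℝ) : per A = 1 := by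
  simp [per]

/-- `Equiv.Perm.decomposeFin.symm (p, σ)` is `swap 0 p` after `σ` acting on the successors:
`p = 0` gives the first term, `p = (σ i₀).succ` the summand at `i₀`. -/
lemma per_fin_succ (A : Matrix (Fin (m + 1)) (Fin (m + 1)) ℝ) :
    per A = ∑ σ : Equiv.Perm (Fin m),
      (A 0 0 * ∏ i, A i.succ (σ i).succ +
        ∑ i₀, A 0 (σ i₀).succ * A i₀.succ 0 * ∏ i ∈ univ.erase i₀, A i.succ (σ i).succ) := by
  rw [per, ← Equiv.sum_comp Equiv.Perm.decomposeFin.symm, Fintype.sum_prod_type, sum_comm]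
  refine sum_congr rfl fun σ _ ↦ ?_
  rw [Fin.sum_univ_succ]
  congr 1
  · simp [Fin.prod_univ_succ]
  · rw [← Equiv.sum_comp σ]
    refine sum_congr rfl fun i₀ _ ↦ ?_
    rw [Fin.prod_univ_succ]
    simp only [Equiv.Perm.decomposeFin_symm_apply_zero, Equiv.Perm.decomposeFin_symm_apply_succ]
    rw [← mul_prod_erase univ _ (mem_univ i₀), Equiv.swap_apply_right, mul_assoc]
    congr 2
    refine prod_congr rfl fun i hi ↦ ?_
    rw [Equiv.swap_apply_of_ne_of_ne (Fin.succ_ne_zero _)]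
    exact fun h ↦ (mem_erase.mp hi).1 (σ.injective (Fin.succ_injective _ h))

/-- One step of the permanent process: `a'ᵢⱼ = aᵢⱼ + aᵢ₀ a₀ⱼ / a₀₀` on the remaining indices. -/
noncomputable def pivot (A : Matrix (Fin (m + 1)) (Fin (m + 1)) ℝ) : Matrix (Fin m) (Fin m) ℝ :=
  Matrix.of fun i j ↦ A i.succ j.succ + A i.succ 0 * A 0 j.succ / A 0 0

lemma per_le_mul_per_pivot (A : Matrix (Fin (m + 1)) (Fin (m + 1)) ℝ)
    (hA : ∀ i j, 0 ≤ A i j) (h₀₀ : 0 < A 0 0) :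
    per A ≤ A 0 0 * per (pivot A) := by
  rw [per_fin_succ, per, mul_sum]
  refine sum_le_sum fun σ _ ↦ ?_
  have hrankOne : ∀ i₀, A 0 (σ i₀).succ * A i₀.succ 0 =
      A 0 0 * (A i₀.succ 0 * A 0 (σ i₀).succ / A 0 0) := fun _ ↦ by
    field_simp
  simp_rw [hrankOne, mul_assoc, ← mul_sum, ← mul_add]
  refine mul_le_mul_of_nonneg_left ?_ h₀₀.le
  simp only [pivot, Matrix.of_apply]
  exact prod_add_sum_mul_prod_erase_le_prod_add univ (fun _ _ ↦ hA _ _)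
    fun _ _ ↦ div_nonneg (mul_nonneg (hA _ _) (hA _ _)) h₀₀.le

end Permanent

section KMS

noncomputable def kms (m : ℕ) (x b : ℝ) : Matrix (Fin m) (Fin m) ℝ :=
  Matrix.of fun i j ↦ x ^ ((i : ℤ) - j).natAbs + b * x ^ ((i : ℕ) + j)

variable {x b : ℝ}

lemma kms_nonneg {m : ℕ} (hx : 0 ≤ x) (hb : 0 ≤ b) (i j : Fin m) : 0 ≤ kms m x b i j :=
  add_nonneg (pow_nonneg hx _) (mul_nonneg hb (pow_nonneg hx _))

lemma kms_zero_zero {m : ℕ} : kms (m + 1) x b 0 0 = 1 + b := by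
  simp [kms]

lemma pivot_kms {m : ℕ} (hb : 1 + b ≠ 0) :
    pivot (kms (m + 1) x b) = kms m x ((1 + 2 * b) * x ^ 2) := by
  ext i j
  rw [pivot, Matrix.of_apply, kms_zero_zero]
  simp only [kms, Matrix.of_apply, Fin.val_succ, Fin.val_zero, Nat.cast_add, Nat.cast_one,
    Nat.cast_zero]
  have hdiff : ((i : ℤ) + 1 - ((j : ℤ) + 1)).natAbs = ((i : ℤ) - j).natAbs := by omega
  have hrow : ((i : ℤ) + 1 - 0).natAbs = i + 1 := by omega
  have hcol : (0 - ((j : ℤ) + 1)).natAbs = j + 1 := by omega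
  rw [hdiff, hrow, hcol]
  field_simp
  ring

lemma per_kms_le {β : ℝ} (hx : 0 ≤ x) (hβ : (1 + 2 * β) * x ^ 2 ≤ β) :
    ∀ m : ℕ, ∀ b, 0 ≤ b → b ≤ β → per (kms m x b) ≤ (1 + β) ^ m
  | 0, _, _, _ => by rw [per_fin_zero, pow_zero]
  | m + 1, b, hb₀, hbβ => by
    have hb' : 0 ≤ (1 + 2 * b) * x ^ 2 := by positivity
    have hb'β : (1 + 2 * b) * x ^ 2 ≤ β := le_trans (by gcongr) hβ
    calc per (kms (m + 1) x b)
        ≤ kms (m + 1) x b 0 0 * per (pivot (kms (m + 1) x b)) :=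
          per_le_mul_per_pivot _ (kms_nonneg hx hb₀) (by rw [kms_zero_zero]; linarith)
      _ = (1 + b) * per (kms m x ((1 + 2 * b) * x ^ 2)) := by
          rw [kms_zero_zero, pivot_kms (by linarith)]
      _ ≤ (1 + β) * (1 + β) ^ m := by
          gcongr
          · exact per_nonneg (kms_nonneg hx hb')
          · linarith
          · exact per_kms_le hx hβ m _ hb' hb'β
      _ = (1 + β) ^ (m + 1) := (pow_succ' _ _).symm

end KMS

theorem stmt16 {n : ℕ} (c : ℝ) (hc : 1 < c) (hc2 : 2 < c ^ 2)
    (A : Matrix (Fin n) (Fin n) ℝ)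
    (hA : ∀ i j : Fin n, A i j = c ^ (-|((i : ℕ) : ℤ) - ((j : ℕ) : ℤ)|)) :
    per A ≤ (1 + 1 / (c ^ 2 - 2)) ^ n := by
  have hA_kms : A = kms n c⁻¹ 0 := by
    ext i j
    rw [hA, kms, Matrix.of_apply, zero_mul, add_zero, Int.abs_eq_natAbs, _root_.zpow_neg,
      zpow_natCast, inv_pow]
  have hfixed : (1 + 2 * (1 / (c ^ 2 - 2))) * c⁻¹ ^ 2 = 1 / (c ^ 2 - 2) := by
    have : c ^ 2 - 2 ≠ 0 := by linarith
    field_simp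
    ring
  rw [hA_kms]
  exact per_kms_le (inv_nonneg.mpr (by linarith)) hfixed.le n 0 le_rfl
    (one_div_nonneg.mpr (by linarith))
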